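/- Let ⊗ and ⊕ be uninorms on [0,1] such that for all 0 ≤ x₁ ≤ x₂ ≤ 1, 0 ≤ y₁ ≤ y₂ ≤ 1: (x₁⊗y₁) ⊕ (x₂⊗y₂) ≥ (x₁⊗y₂) ⊕ (x₂⊗y₁). Let a₁,…,a_{2n} ∈ [0,1] and let b₁ ≤ … ≤ b_{2n} be their sorted rearrangement. Then ⊕_{i=1}^n (b_i ⊗ b_{2n−i+1}) ≤ ⊕_{i=1}^n (a_{2i−1} ⊗ a_{2i}) ≤ ⊕_{i=1}^n (b_{2i−1} ⊗ b_{2i}). -/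

import Mathlib

open Set

def IsUninorm (f : ℝ → ℝ → ℝ) : Prop :=
  (∀ x ∈ Icc (0:ℝ) 1, ∀ y ∈ Icc (0:ℝ) 1, f x y ∈ Icc (0:ℝ) 1) ∧
  (∀ x ∈ Icc (0:ℝ) 1, ∀ y ∈ Icc (0:ℝ) 1, f x y = f y x) ∧
  (∀ x ∈ Icc (0:ℝ) 1, ∀ y ∈ Icc (0:ℝ) 1, ∀ z ∈ Icc (0:ℝ) 1, f (f x y) z = f x (f y z)) ∧
  (∀ x ∈ Icc (0:ℝ) 1, ∀ y ∈ Icc (0:ℝ) 1, ∀ z ∈ Icc (0:ℝ) 1, x ≤ y → f x z ≤ f y z) ∧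
  (∃ e ∈ Icc (0:ℝ) 1, ∀ x ∈ Icc (0:ℝ) 1, f x e = x)

def iterOp (op : ℝ → ℝ → ℝ) : (n : ℕ) → (Fin (n+1) → ℝ) → ℝ
  | 0, v => v 0
  | n+1, v => op (iterOp op n (fun i => v i.castSucc)) (v (Fin.last (n+1)))

/-!
Both bounds come from a greedy exchange argument in the ordered commutative monoid
`([0,1], ⊕)`. The hypothesis on `⊗` says that for `x₁ ≤ x₂`, `y₁ ≤ y₂` the re-pairing of
`{x₁, y₂}, {x₂, y₁}` as `{x₁, y₁}, {x₂, y₂}` does not decrease the `⊕`-sum. In any pairing of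
the `b`'s, one such exchange puts the smallest element together with the second smallest
without decreasing the sum, and recursing on the rest reaches the pairing `{b₁, b₂}, {b₃, b₄}, …`.
Putting the smallest element together with the largest instead does not increase the sum, and
recursing reaches the nested pairing `{b₁, b_{2n}}, {b₂, b_{2n-1}}, …`; this is the same argument
in the order dual.
-/

variable {α M : Type*}

def pairSupport (P : Multiset (α × α)) : Multiset α := P.map Prod.fst + P.map Prod.snd

def pairingProd [CommMonoid M] (f : α → α → M) (P : Multiset (α × α)) : M :=
  (P.map fun p => f p.1 p.2).prod

@[simp]
lemma pairSupport_cons (p : α × α) (P : Multiset (α × α)) :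
    pairSupport (p ::ₘ P) = p.1 ::ₘ p.2 ::ₘ pairSupport P := by
  simp [pairSupport, Multiset.cons_add, Multiset.add_cons, Multiset.cons_swap p.2]

lemma pairSupport_eq_zero {P : Multiset (α × α)} : pairSupport P = 0 ↔ P = 0 := by
  simp [pairSupport]

section CommMonoid

variable [CommMonoid M] {f : α → α → M}

@[simp]
lemma pairingProd_cons (p : α × α) (P : Multiset (α × α)) :
    pairingProd f (p ::ₘ P) = f p.1 p.2 * pairingProd f P := by
  simp [pairingProd]

lemma exists_pairSupport_eq_cons_cons (hf : ∀ x y, f x y = f y x) {x : α}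
    {P : Multiset (α × α)} (hx : x ∈ pairSupport P) :
    ∃ u P', pairSupport P = x ::ₘ u ::ₘ pairSupport P' ∧
      pairingProd f P = f x u * pairingProd f P' := by
  simp only [pairSupport, Multiset.mem_add, Multiset.mem_map] at hx
  rcases hx with ⟨p, hp, rfl⟩ | ⟨p, hp, rfl⟩ <;>
    obtain ⟨P', rfl⟩ := Multiset.exists_cons_of_mem hp
  · exact ⟨p.2, P', by simp⟩
  · exact ⟨p.1, P', by simp [Multiset.cons_swap, hf]⟩

/-- `r p v` licenses the exchange: if `p` precedes two elements `u, z` of `Q` with `r p u` and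
`r p z`, re-pairing `{p.1, u}, {p.2, z}` as `p, {u, z}` does not decrease the product. -/
theorem pairingProd_le_of_pairwise [Preorder M] [MulLeftMono M] (hf : ∀ x y, f x y = f y x)
    (r : α × α → α → Prop) (hr : ∀ p u z, r p u → r p z → f p.1 u * f p.2 z ≤ f p.1 p.2 * f u z)
    {Q : List (α × α)} (hQ : Q.Pairwise fun p q => r p q.1 ∧ r p q.2)
    {P : Multiset (α × α)} (hP : pairSupport P = pairSupport Q) :
    pairingProd f P ≤ pairingProd f Q := by
  induction Q generalizing P with
  | nil =>
    obtain rfl : P = 0 := pairSupport_eq_zero.1 hP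
    rfl
  | cons p Q ih =>
    obtain ⟨x, y⟩ := p
    rw [List.pairwise_cons] at hQ
    have hrQ : ∀ v ∈ pairSupport (Q : Multiset (α × α)), r (x, y) v := by
      simp only [pairSupport, Multiset.mem_add, Multiset.mem_map, Multiset.mem_coe]
      rintro v (⟨q, hq, rfl⟩ | ⟨q, hq, rfl⟩)
      exacts [(hQ.1 q hq).1, (hQ.1 q hq).2]
    rw [← Multiset.cons_coe, pairSupport_cons] at hP
    rw [← Multiset.cons_coe, pairingProd_cons]
    obtain ⟨u, P₁, hP₁, hprod₁⟩ :=
      exists_pairSupport_eq_cons_cons hf (hP ▸ Multiset.mem_cons_self x _)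
    rw [hP₁, Multiset.cons_inj_right, Multiset.cons_eq_cons] at hP
    rcases hP with ⟨rfl, hP⟩ | ⟨-, cs, hcs₁, hcsQ⟩
    · rw [hprod₁]
      exact mul_le_mul_right (ih hQ.2 hP) _
    · obtain ⟨z, P₂, hP₂, hprod₂⟩ :=
        exists_pairSupport_eq_cons_cons hf (hcs₁ ▸ Multiset.mem_cons_self y cs)
      rw [hP₂, Multiset.cons_inj_right] at hcs₁
      have hsupp : pairSupport ((u, z) ::ₘ P₂) = pairSupport (Q : Multiset (α × α)) := by
        rw [hcsQ, ← hcs₁, pairSupport_cons]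
      have hu : r (x, y) u := hrQ u (by simp [hcsQ])
      have hz : r (x, y) z := hrQ z (by simp [hcsQ, ← hcs₁])
      calc pairingProd f P = f x u * f y z * pairingProd f P₂ := by rw [hprod₁, hprod₂, mul_assoc]
        _ ≤ f x y * f u z * pairingProd f P₂ := mul_le_mul_left (hr (x, y) u z hu hz) _
        _ = f x y * pairingProd f ((u, z) ::ₘ P₂) := by rw [pairingProd_cons, mul_assoc]
        _ ≤ f x y * pairingProd f Q := mul_le_mul_right (ih hQ.2 hsupp) _

end CommMonoid

section LinearOrder

variable [LinearOrder α] [CommMonoid M] [Preorder M] [MulLeftMono M] {f : α → α → M}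

theorem pairingProd_le_of_chain (hf : ∀ x y, f x y = f y x)
    (hsup : ∀ x₁ x₂ y₁ y₂, x₁ ≤ x₂ → y₁ ≤ y₂ → f x₁ y₂ * f x₂ y₁ ≤ f x₁ y₁ * f x₂ y₂)
    {Q : List (α × α)} (hQ : Q.Pairwise fun p q => max p.1 p.2 ≤ q.1 ∧ max p.1 p.2 ≤ q.2)
    {P : Multiset (α × α)} (hP : pairSupport P = pairSupport Q) :
    pairingProd f P ≤ pairingProd f Q := by
  refine pairingProd_le_of_pairwise hf (fun p v => max p.1 p.2 ≤ v) ?_ hQ hP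
  rintro ⟨x, y⟩ u z hu hz
  simpa only [hf z] using hsup x z y u (le_of_max_le_left hz) (le_of_max_le_right hu)

theorem pairingProd_le_of_nested (hf : ∀ x y, f x y = f y x)
    (hsup : ∀ x₁ x₂ y₁ y₂, x₁ ≤ x₂ → y₁ ≤ y₂ → f x₁ y₂ * f x₂ y₁ ≤ f x₁ y₁ * f x₂ y₂)
    {Q : List (α × α)} (hQ : Q.Pairwise fun p q => q.1 ∈ Icc p.1 p.2 ∧ q.2 ∈ Icc p.1 p.2)
    {P : Multiset (α × α)} (hP : pairSupport P = pairSupport Q) :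
    pairingProd f Q ≤ pairingProd f P :=
  pairingProd_le_of_pairwise (M := Mᵒᵈ) (f := fun x y => OrderDual.toDual (f x y))
    (fun x y => congrArg _ (hf x y)) (fun p v => v ∈ Icc p.1 p.2)
    (fun ⟨x, w⟩ u z hu hz => show f x w * f u z ≤ f x u * f w z by
      simpa only [hf z] using hsup x z u w hz.1 hu.2) hQ hP

end LinearOrder

section Indexing

open Function

lemma map_add_map_univ_eq {ι κ : Type*} [Fintype ι] [Fintype κ] (v : κ → α) (e₁ e₂ : ι → κ)
    (he₁ : Injective e₁) (he₂ : Injective e₂) (hdisj : ∀ i j, e₁ i ≠ e₂ j)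
    (hcover : ∀ k, k ∈ range e₁ ∨ k ∈ range e₂) :
    Finset.univ.val.map (v ∘ e₁) + Finset.univ.val.map (v ∘ e₂) = Finset.univ.val.map v := by
  rw [← Multiset.map_map, ← Multiset.map_map, ← Multiset.map_add]
  congr 1
  refine (Multiset.Nodup.ext ?_ Finset.univ.nodup).2 fun k => by simpa using hcover k
  refine Multiset.nodup_add.2 ⟨Finset.univ.nodup.map he₁, Finset.univ.nodup.map he₂, ?_⟩
  refine Multiset.disjoint_left.2 fun hk hk' => ?_
  simp only [Multiset.mem_map, Finset.mem_val, Finset.mem_univ, true_and] at hk hk'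
  obtain ⟨i, rfl⟩ := hk
  obtain ⟨j, hj⟩ := hk'
  exact hdisj i j hj.symm

lemma pairSupport_ofFn {m : ℕ} (g : Fin m → α × α) :
    pairSupport (List.ofFn g : Multiset (α × α)) =
      Finset.univ.val.map (Prod.fst ∘ g) + Finset.univ.val.map (Prod.snd ∘ g) := by
  simp [pairSupport, ← Fin.univ_val_map, Multiset.map_map]

variable {m : ℕ}

def evenOddPairs (v : Fin (2 * m) → α) (i : Fin m) : α × α :=
  (v ⟨2 * i, by omega⟩, v ⟨2 * i + 1, by omega⟩)

def nestedPairs (v : Fin (2 * m) → α) (i : Fin m) : α × α :=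
  (v ⟨i, by omega⟩, v ⟨2 * m - 1 - i, by omega⟩)

lemma pairSupport_evenOddPairs (v : Fin (2 * m) → α) :
    pairSupport (List.ofFn (evenOddPairs v) : Multiset (α × α)) = Finset.univ.val.map v := by
  rw [pairSupport_ofFn]
  refine map_add_map_univ_eq v (fun i : Fin m => (⟨2 * i, by omega⟩ : Fin (2 * m)))
    (fun i => ⟨2 * i + 1, by omega⟩) ?_ ?_ ?_ ?_
  iterate 3 (intro i j h; simp only [Fin.mk.injEq] at h; omega)
  · intro k
    rcases Nat.even_or_odd' k with ⟨j, hj | hj⟩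
    · exact .inl ⟨⟨j, by omega⟩, by ext; simp [hj]⟩
    · exact .inr ⟨⟨j, by omega⟩, by ext; simp [hj]⟩

lemma pairSupport_nestedPairs (v : Fin (2 * m) → α) :
    pairSupport (List.ofFn (nestedPairs v) : Multiset (α × α)) = Finset.univ.val.map v := by
  rw [pairSupport_ofFn]
  refine map_add_map_univ_eq v (fun i : Fin m => (⟨i, by omega⟩ : Fin (2 * m)))
    (fun i => ⟨2 * m - 1 - i, by omega⟩) ?_ ?_ ?_ ?_
  iterate 3 (intro i j h; simp only [Fin.mk.injEq] at h; omega)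
  · intro k
    by_cases hk : k < m
    · exact .inl ⟨⟨k, hk⟩, rfl⟩
    · exact .inr ⟨⟨2 * m - 1 - k, by omega⟩, by ext; simp; omega⟩

lemma pairwise_evenOddPairs [LinearOrder α] {v : Fin (2 * m) → α} (hv : Monotone v) :
    (List.ofFn (evenOddPairs v)).Pairwise fun p q => max p.1 p.2 ≤ q.1 ∧ max p.1 p.2 ≤ q.2 := by
  refine List.pairwise_ofFn.2 fun i j (hij : (i : ℕ) < j) => ?_
  simp only [evenOddPairs, max_le_iff]
  refine ⟨⟨hv ?_, hv ?_⟩, hv ?_, hv ?_⟩ <;> exact Fin.mk_le_mk.2 (by omega)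

lemma pairwise_nestedPairs [Preorder α] {v : Fin (2 * m) → α} (hv : Monotone v) :
    (List.ofFn (nestedPairs v)).Pairwise fun p q => q.1 ∈ Icc p.1 p.2 ∧ q.2 ∈ Icc p.1 p.2 := by
  refine List.pairwise_ofFn.2 fun i j (hij : (i : ℕ) < j) => ?_
  simp only [nestedPairs, mem_Icc]
  refine ⟨⟨hv ?_, hv ?_⟩, hv ?_, hv ?_⟩ <;> exact Fin.mk_le_mk.2 (by omega)

end Indexing

namespace IsUninorm

variable {F : ℝ → ℝ → ℝ} (hF : IsUninorm F) {x y z : ℝ}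
include hF

lemma mem (hx : x ∈ Icc (0:ℝ) 1) (hy : y ∈ Icc (0:ℝ) 1) : F x y ∈ Icc (0:ℝ) 1 :=
  hF.1 x hx y hy

lemma comm (hx : x ∈ Icc (0:ℝ) 1) (hy : y ∈ Icc (0:ℝ) 1) : F x y = F y x :=
  hF.2.1 x hx y hy

lemma assoc (hx : x ∈ Icc (0:ℝ) 1) (hy : y ∈ Icc (0:ℝ) 1) (hz : z ∈ Icc (0:ℝ) 1) :
    F (F x y) z = F x (F y z) :=
  hF.2.2.1 x hx y hy z hz

lemma exists_identity : ∃ e ∈ Icc (0:ℝ) 1, ∀ x ∈ Icc (0:ℝ) 1, F x e = x :=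
  hF.2.2.2.2

lemma mono_right (hx : x ∈ Icc (0:ℝ) 1) (hy : y ∈ Icc (0:ℝ) 1) (hz : z ∈ Icc (0:ℝ) 1)
    (hyz : y ≤ z) : F x y ≤ F x z := by
  rw [hF.comm hx hy, hF.comm hx hz]
  exact hF.2.2.2.1 y hy z hz x hx hyz

end IsUninorm

/-- A structure rather than the subtype `Icc 0 1`, which already carries the usual product. -/
@[ext]
structure UninormMonoid {op : ℝ → ℝ → ℝ} (hop : IsUninorm op) where
  val : ℝ
  mem : val ∈ Icc (0:ℝ) 1

namespace UninormMonoid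

variable {op : ℝ → ℝ → ℝ} {hop : IsUninorm op}

instance : PartialOrder (UninormMonoid hop) := PartialOrder.lift val fun _ _ => UninormMonoid.ext

noncomputable instance : CommMonoid (UninormMonoid hop) where
  mul x y := ⟨op x.val y.val, hop.mem x.mem y.mem⟩
  mul_assoc x y z := UninormMonoid.ext (hop.assoc x.mem y.mem z.mem)
  one := ⟨hop.exists_identity.choose, hop.exists_identity.choose_spec.1⟩
  mul_one x := UninormMonoid.ext (hop.exists_identity.choose_spec.2 x.val x.mem)
  one_mul x := UninormMonoid.ext <| (hop.comm hop.exists_identity.choose_spec.1 x.mem).trans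
    (hop.exists_identity.choose_spec.2 x.val x.mem)
  mul_comm x y := UninormMonoid.ext (hop.comm x.mem y.mem)

@[simp]
lemma val_mul (x y : UninormMonoid hop) : (x * y).val = op x.val y.val := rfl

instance : MulLeftMono (UninormMonoid hop) :=
  ⟨fun x _ _ h => hop.mono_right x.mem (UninormMonoid.mem _) (UninormMonoid.mem _) h⟩

lemma iterOp_val_eq_val_prod (n : ℕ) (w : Fin (n + 1) → UninormMonoid hop) :
    iterOp op n (fun i => (w i).val) = (∏ i, w i).val := by
  induction n with
  | zero => simp [iterOp]
  | succ n ih => rw [iterOp, Fin.prod_univ_castSucc, val_mul, ← ih]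

variable (hop) {ot : ℝ → ℝ → ℝ} (hot : IsUninorm ot)

def ofUninorm (x y : Icc (0:ℝ) 1) : UninormMonoid hop := ⟨ot x y, hot.mem x.2 y.2⟩

lemma ofUninorm_comm (x y : Icc (0:ℝ) 1) : ofUninorm hop hot x y = ofUninorm hop hot y x :=
  UninormMonoid.ext (hot.comm x.2 y.2)

lemma ofUninorm_exchange
    (hcond : ∀ x₁ x₂ y₁ y₂ : ℝ, 0 ≤ x₁ → x₁ ≤ x₂ → x₂ ≤ 1 → 0 ≤ y₁ → y₁ ≤ y₂ → y₂ ≤ 1 →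
      op (ot x₁ y₂) (ot x₂ y₁) ≤ op (ot x₁ y₁) (ot x₂ y₂))
    (x₁ x₂ y₁ y₂ : Icc (0:ℝ) 1) (hx : x₁ ≤ x₂) (hy : y₁ ≤ y₂) :
    ofUninorm hop hot x₁ y₂ * ofUninorm hop hot x₂ y₁ ≤
      ofUninorm hop hot x₁ y₁ * ofUninorm hop hot x₂ y₂ :=
  hcond x₁ x₂ y₁ y₂ x₁.2.1 hx x₂.2.2 y₁.2.1 hy y₂.2.2

lemma iterOp_eq_val_pairingProd {n : ℕ} (g : Fin (n + 1) → Icc (0:ℝ) 1 × Icc (0:ℝ) 1) :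
    iterOp op n (fun i => ot (g i).1 (g i).2) =
      (pairingProd (ofUninorm hop hot) (List.ofFn g : Multiset _)).val := by
  rw [pairingProd, Multiset.map_coe, Multiset.prod_coe, List.map_ofFn, List.prod_ofFn,
    ← iterOp_val_eq_val_prod]
  rfl

end UninormMonoid

theorem rearrangement_variant_pairs (ot op : ℝ → ℝ → ℝ)
    (hot : IsUninorm ot) (hop : IsUninorm op)
    (hcond : ∀ x₁ x₂ y₁ y₂ : ℝ, 0 ≤ x₁ → x₁ ≤ x₂ → x₂ ≤ 1 → 0 ≤ y₁ → y₁ ≤ y₂ → y₂ ≤ 1 →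
      op (ot x₁ y₂) (ot x₂ y₁) ≤ op (ot x₁ y₁) (ot x₂ y₂))
    (n : ℕ) (a b : Fin (2 * (n + 1)) → ℝ)
    (ha : ∀ i, a i ∈ Icc (0:ℝ) 1)
    (hb : Monotone b)
    (hperm : ∃ σ : Equiv.Perm (Fin (2 * (n + 1))), b = a ∘ σ) :
    iterOp op n (fun i : Fin (n+1) =>
        ot (b ⟨i.1, by have := i.isLt; omega⟩)
           (b ⟨2 * (n + 1) - 1 - i.1, by have := i.isLt; omega⟩)) ≤
      iterOp op n (fun i : Fin (n+1) =>
        ot (a ⟨2 * i.1, by have := i.isLt; omega⟩)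
           (a ⟨2 * i.1 + 1, by have := i.isLt; omega⟩)) ∧
    iterOp op n (fun i : Fin (n+1) =>
        ot (a ⟨2 * i.1, by have := i.isLt; omega⟩)
           (a ⟨2 * i.1 + 1, by have := i.isLt; omega⟩)) ≤
      iterOp op n (fun i : Fin (n+1) =>
        ot (b ⟨2 * i.1, by have := i.isLt; omega⟩)
           (b ⟨2 * i.1 + 1, by have := i.isLt; omega⟩)) := by
  obtain ⟨σ, rfl⟩ := hperm
  let v : Fin (2 * (n + 1)) → Icc (0:ℝ) 1 := fun i => ⟨a i, ha i⟩
  have hv : Monotone (v ∘ σ) := hb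
  have hsupp : pairSupport (List.ofFn (evenOddPairs v) : Multiset _) =
      Finset.univ.val.map (v ∘ σ) := by
    rw [pairSupport_evenOddPairs, ← Multiset.map_map, Multiset.map_univ_val_equiv]
  have hf := UninormMonoid.ofUninorm_comm hop hot
  have hsup := UninormMonoid.ofUninorm_exchange hop hot hcond
  have hval := UninormMonoid.iterOp_eq_val_pairingProd hop hot (n := n)
  refine ⟨?_, ?_⟩
  · calc _ = _ := hval (nestedPairs (v ∘ σ))
      _ ≤ _ := pairingProd_le_of_nested hf hsup (pairwise_nestedPairs hv)
          (hsupp.trans (pairSupport_nestedPairs _).symm)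
      _ = _ := (hval (evenOddPairs v)).symm
  · calc _ = _ := hval (evenOddPairs v)
      _ ≤ _ := pairingProd_le_of_chain hf hsup (pairwise_evenOddPairs hv)
          (hsupp.trans (pairSupport_evenOddPairs _).symm)
      _ = _ := (hval (evenOddPairs (v ∘ σ))).symm
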